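/- Let φ : ℂ[q_{ijkl} : i,j,k,l ∈ ℤ/2ℤ] → ℂ[a_0,a_1,b_0,b_1,c_0,c_1,d_0,d_1,e_0,e_1,f_0,f_1,g_0,g_1] be the ℂ-algebra homomorphism sending q_{ijkl} ↦ a_i b_j c_k d_l e_{i+j} f_{k+l} g_{i+j+k+l} (indices in ℤ/2ℤ). Then the kernel of φ is generated by the 2 × 2 minors of the four 2 × 4 matrices: for each i ∈ {0,1}, the matrix with rows (q_{0i00}, q_{0i01}, q_{0i10}, q_{0i11}) and (q_{1(1+i)00}, q_{1(1+i)01}, q_{1(1+i)10}, q_{1(1+i)11}), and the matrix with rows (q_{00i0}, q_{01i0}, q_{10i0}, q_{11i0}) and (q_{00(1+i)1}, q_{01(1+i)1}, q_{10(1+i)1}, q_{11(1+i)1}). -/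

import Mathlib

open MvPolynomial

/-- The monomial map of the Jukes–Cantor binary model on the balanced binary tree with
four leaves, in Fourier coordinates: `q_{ijkl} ↦ a_i b_j c_k d_l e_{i+j} f_{k+l} g_{i+j+k+l}`.
The seven edges `a,b,c,d,e,f,g` are indexed by `Fin 7`. -/
noncomputable def phiJC4 :
    MvPolynomial (Fin 4 → ZMod 2) ℂ →ₐ[ℂ] MvPolynomial (Fin 7 × ZMod 2) ℂ :=
  aeval fun v =>
    X (0, v 0) * X (1, v 1) * X (2, v 2) * X (3, v 3) *
    X (4, v 0 + v 1) * X (5, v 2 + v 3) * X (6, v 0 + v 1 + v 2 + v 3)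

/-- The `2 × 2` minors of the four `2 × 4` matrices: for `i ∈ {0,1}`, the matrix with rows
`(q_{0i00}, q_{0i01}, q_{0i10}, q_{0i11})`, `(q_{1(1+i)00}, q_{1(1+i)01}, q_{1(1+i)10},
q_{1(1+i)11})` and the matrix with rows `(q_{00i0}, q_{01i0}, q_{10i0}, q_{11i0})`,
`(q_{00(1+i)1}, q_{01(1+i)1}, q_{10(1+i)1}, q_{11(1+i)1})`. -/
def jc4Minors : Set (MvPolynomial (Fin 4 → ZMod 2) ℂ) :=
  {p | ∃ i k l k' l' : ZMod 2,
      p = X ![0, i, k, l] * X ![1, 1 + i, k', l'] -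
          X ![0, i, k', l'] * X ![1, 1 + i, k, l]} ∪
  {p | ∃ i k l k' l' : ZMod 2,
      p = X ![k, l, i, 0] * X ![k', l', 1 + i, 1] -
          X ![k', l', i, 0] * X ![k, l, 1 + i, 1]}

/-!
φ is a monomial map, so its kernel is spanned by the binomials `X^m - X^m'` with
`φ(X^m) = φ(X^m')`. For a multiset `S` of patterns, the exponent of `φ(∏_{v ∈ S} q_v)` counts
the labels of each edge; over `ZMod 2` a multiset of pairs is determined by the multisets of
first coordinates, of second coordinates and of sums, so this exponent determines the multisets
of left pairs `(v₀, v₁)`, right pairs `(v₂, v₃)` and interior pairs `(v₀ + v₁, v₂ + v₃)` of `S`.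
Modulo the minors one may exchange the right pairs of two patterns whose left pairs have the
same sum, or their left pairs when their right pairs have the same sum. If `S` and `S'` lie in
the same fibre, two such exchanges turn `S'` into a multiset containing a given pattern of `S`;
cancelling that pattern, induction on `|S|` finishes the proof.
-/

theorem MvPolynomial.mapDomainLinearMap_monomial {σ τ R : Type*} [CommSemiring R]
    (f : (σ →₀ ℕ) → τ →₀ ℕ) (m : σ →₀ ℕ) (c : R) :
    AddMonoidAlgebra.mapDomainLinearMap R R f (monomial m c) = monomial (f m) c := by
  simp [← single_eq_monomial]

theorem MvPolynomial.ker_le_of_monomial_sub_mem {σ τ R : Type*} [CommRing R]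
    (φ : MvPolynomial σ R →ₐ[R] MvPolynomial τ R) (W : (σ →₀ ℕ) → τ →₀ ℕ)
    (hφ : ∀ m, φ (monomial m 1) = monomial (W m) 1) {I : Ideal (MvPolynomial σ R)}
    (hI : ∀ m m', W m = W m' → monomial m 1 - monomial m' 1 ∈ I) :
    RingHom.ker φ ≤ I := by
  -- With `s` a section of `W` over its image, every `p` is congruent modulo `I` to its
  -- push-forward along `s ∘ W`, which is the push-forward of `φ p` along `s`.
  have hφ_push : ∀ p, φ p = AddMonoidAlgebra.mapDomainLinearMap R R W p := by
    intro p
    induction p using MvPolynomial.induction_on' with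
    | monomial m c =>
      rw [mapDomainLinearMap_monomial, ← mul_one c, ← smul_eq_mul, ← smul_monomial, map_smul, hφ,
        smul_monomial, smul_eq_mul, mul_one]
    | add p q hp hq => rw [map_add, map_add, hp, hq]
  let s := Function.invFun W
  have hsub_push : ∀ p, p - AddMonoidAlgebra.mapDomainLinearMap R R (s ∘ W) p ∈ I := by
    intro p
    induction p using MvPolynomial.induction_on' with
    | monomial m c =>
      rw [mapDomainLinearMap_monomial, ← mul_one c, ← C_mul_monomial, ← C_mul_monomial, ← mul_sub]
      exact I.mul_mem_left _ (hI _ _ (Function.invFun_eq ⟨m, rfl⟩).symm)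
    | add p q hp hq =>
      rw [map_add, add_sub_add_comm]
      exact I.add_mem hp hq
  intro p hp
  have hpush_zero : AddMonoidAlgebra.mapDomainLinearMap R R (s ∘ W) p = 0 := by
    rw [AddMonoidAlgebra.mapDomainLinearMap_comp, LinearMap.comp_apply, ← hφ_push,
      RingHom.mem_ker.mp hp, map_zero]
  simpa only [hpush_zero, sub_zero] using hsub_push p

theorem MvPolynomial.monomial_one_eq_prod_X {σ R : Type*} [CommSemiring R] (m : σ →₀ ℕ) :
    monomial m (1 : R) = (m.toMultiset.map X).prod := by
  rw [Finsupp.toMultiset_map, Finsupp.prod_toMultiset,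
    Finsupp.prod_mapDomain_index (fun _ => pow_zero _) (fun _ _ _ => pow_add _ _ _),
    ← prod_X_pow_eq_monomial]
  rfl

theorem Multiset.count_map_eq_count_add_count {α β : Type*} [DecidableEq α] [DecidableEq β]
    {f : α → β} {b : β} {a₁ a₂ : α} (hne : a₁ ≠ a₂) (hf : ∀ a, f a = b ↔ a = a₁ ∨ a = a₂)
    (S : Multiset α) : (S.map f).count b = S.count a₁ + S.count a₂ := by
  induction S using Multiset.induction with
  | empty => simp
  | cons a S ih =>
    simp only [Multiset.map_cons, Multiset.count_cons, ih, eq_comm (a := b), hf]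
    by_cases h₁ : a = a₁
    · subst h₁
      simp only [hne, Ne.symm hne, or_false, if_true, if_false, add_zero]
      omega
    · by_cases h₂ : a = a₂
      · subst h₂
        simp only [h₁, Ne.symm h₁, or_true, if_true, if_false, add_zero]
        omega
      · simp [h₁, h₂, Ne.symm h₁, Ne.symm h₂]

theorem Multiset.map_pair_eq_of_map_add_eq {α : Type*} {S S' : Multiset α} {f g : α → ZMod 2}
    (hf : S.map f = S'.map f) (hg : S.map g = S'.map g)
    (hfg : S.map (fun a => f a + g a) = S'.map (fun a => f a + g a)) :
    S.map (fun a => (f a, g a)) = S'.map (fun a => (f a, g a)) := by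
  set M := S.map (fun a => (f a, g a))
  set M' := S'.map (fun a => (f a, g a))
  have count_eq : ∀ (F : ZMod 2 × ZMod 2 → ZMod 2) (b : ZMod 2) (p₁ p₂ : ZMod 2 × ZMod 2),
      M.map F = M'.map F → p₁ ≠ p₂ → (∀ p, F p = b ↔ p = p₁ ∨ p = p₂) →
      M.count p₁ + M.count p₂ = M'.count p₁ + M'.count p₂ := by
    intro F b p₁ p₂ hF hne hfib
    rw [← Multiset.count_map_eq_count_add_count hne hfib, hF,
      Multiset.count_map_eq_count_add_count hne hfib]
  have h₁ : M.map Prod.fst = M'.map Prod.fst := by simpa [M, M', Multiset.map_map] using hf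
  have h₂ : M.map Prod.snd = M'.map Prod.snd := by simpa [M, M', Multiset.map_map] using hg
  have h₃ : M.map (fun p => p.1 + p.2) = M'.map (fun p => p.1 + p.2) := by
    simpa [M, M', Multiset.map_map, Function.comp_def] using hfg
  have e₁ := count_eq _ 0 (0, 0) (0, 1) h₁ (by decide) (by decide)
  have e₂ := count_eq _ 1 (1, 0) (1, 1) h₁ (by decide) (by decide)
  have e₃ := count_eq _ 0 (0, 0) (1, 0) h₂ (by decide) (by decide)
  have e₄ := count_eq _ 0 (0, 0) (1, 1) h₃ (by decide) (by decide)
  have zmod_two : ∀ a : ZMod 2, a = 0 ∨ a = 1 := by decide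
  ext ⟨a, b⟩
  rcases zmod_two a with rfl | rfl <;> rcases zmod_two b with rfl | rfl <;> omega

theorem ZMod.two_add_eq_add_cases {a b a' b' : ZMod 2} (h : a + b = a' + b') :
    (a = a' ∧ b = b') ∨ (a = 0 ∧ a' = 1 ∧ b' = 1 + b) ∨ (a = 1 ∧ a' = 0 ∧ b = 1 + b') := by
  revert a b a' b'; decide

namespace JC4

abbrev Pattern := Fin 4 → ZMod 2

def edgeLabel (v : Pattern) : Fin 7 → ZMod 2 :=
  ![v 0, v 1, v 2, v 3, v 0 + v 1, v 2 + v 3, v 0 + v 1 + v 2 + v 3]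

noncomputable def edgeExponent (v : Pattern) : Fin 7 × ZMod 2 →₀ ℕ :=
  ∑ i, Finsupp.single (i, edgeLabel v i) 1

noncomputable def degree (S : Multiset Pattern) : Fin 7 × ZMod 2 →₀ ℕ :=
  (S.map edgeExponent).sum

theorem degree_cons (v : Pattern) (S : Multiset Pattern) :
    degree (v ::ₘ S) = edgeExponent v + degree S := by
  rw [degree, Multiset.map_cons, Multiset.sum_cons, degree]

theorem phiJC4_X (v : Pattern) : phiJC4 (X v) = monomial (edgeExponent v) 1 := by
  rw [phiJC4, aeval_X, edgeExponent, Fin.sum_univ_seven]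
  simp only [X, monomial_mul, one_mul]
  rfl

theorem phiJC4_prod_X (S : Multiset Pattern) :
    phiJC4 (S.map X).prod = monomial (degree S) 1 := by
  induction S using Multiset.induction with
  | empty => simp [degree]
  | cons v S ih =>
    rw [Multiset.map_cons, Multiset.prod_cons, map_mul, ih, phiJC4_X, degree_cons, monomial_mul,
      one_mul]

theorem edgeExponent_apply (v : Pattern) (i : Fin 7) (s : ZMod 2) :
    edgeExponent v (i, s) = if edgeLabel v i = s then 1 else 0 := by
  simp only [edgeExponent, Finsupp.finsetSum_apply, Finsupp.single_apply, Prod.mk.injEq, ite_and]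
  simp

theorem degree_apply (S : Multiset Pattern) (i : Fin 7) (s : ZMod 2) :
    degree S (i, s) = (S.map (edgeLabel · i)).count s := by
  induction S using Multiset.induction with
  | empty => simp [degree]
  | cons v S ih =>
    rw [degree_cons, Finsupp.add_apply, ih,
      edgeExponent_apply, Multiset.map_cons, Multiset.count_cons, add_comm]
    simp only [eq_comm]

def left (v : Pattern) : ZMod 2 × ZMod 2 := (v 0, v 1)
def right (v : Pattern) : ZMod 2 × ZMod 2 := (v 2, v 3)
def interior (v : Pattern) : ZMod 2 × ZMod 2 := (v 0 + v 1, v 2 + v 3)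

theorem map_eq_of_degree_eq {S S' : Multiset Pattern} (h : degree S = degree S') :
    S.map left = S'.map left ∧ S.map right = S'.map right ∧ S.map interior = S'.map interior := by
  have hlabel : ∀ i, S.map (edgeLabel · i) = S'.map (edgeLabel · i) := fun i =>
    Multiset.ext.mpr fun s => by rw [← degree_apply, ← degree_apply, h]
  refine ⟨Multiset.map_pair_eq_of_map_add_eq (hlabel 0) (hlabel 1) (hlabel 4),
    Multiset.map_pair_eq_of_map_add_eq (hlabel 2) (hlabel 3) (hlabel 5),
    Multiset.map_pair_eq_of_map_add_eq (hlabel 4) (hlabel 5) ?_⟩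
  simp only [← add_assoc]
  exact hlabel 6

local notation "π" => Ideal.Quotient.mk (Ideal.span jc4Minors)

theorem span_minors_le_ker : Ideal.span jc4Minors ≤ RingHom.ker phiJC4 := by
  have h₁ : ∀ i : ZMod 2, 1 + (1 + i) = i := by decide
  have h₂ : ∀ i : ZMod 2, 1 + i + 1 = i := by decide
  have h₃ : ∀ a b i : ZMod 2, a + b + (1 + i) + 1 = a + b + i := by decide
  rw [Ideal.span_le]
  rintro p (⟨i, k, l, k', l', rfl⟩ | ⟨i, k, l, k', l', rfl⟩) <;>
  · rw [SetLike.mem_coe, RingHom.mem_ker, map_sub, sub_eq_zero]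
    simp only [phiJC4, aeval_X, map_mul, Matrix.cons_val_zero, Matrix.cons_val_one,
      Matrix.cons_val, zero_add, add_zero, h₁, h₂, h₃]
    ring

theorem degree_eq_of_mk_eq {S S' : Multiset Pattern} (h : π (S.map X).prod = π (S'.map X).prod) :
    degree S = degree S' := by
  have := span_minors_le_ker (Ideal.Quotient.eq.mp h)
  rw [RingHom.mem_ker, map_sub, sub_eq_zero, phiJC4_prod_X, phiJC4_prod_X] at this
  exact monomial_left_injective one_ne_zero this

theorem eq_vec (v : Pattern) : v = ![v 0, v 1, v 2, v 3] := by
  funext j; fin_cases j <;> rfl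

def splice (x y : Pattern) : Pattern := ![x 0, x 1, y 2, y 3]

theorem mk_splice_of_left_sum_eq {x y : Pattern} (h : x 0 + x 1 = y 0 + y 1) :
    π (X (splice x y) * X (splice y x)) = π (X x * X y) := by
  obtain ⟨a, b, c, d, rfl⟩ : ∃ a b c d, x = ![a, b, c, d] := ⟨_, _, _, _, eq_vec x⟩
  obtain ⟨a', b', c', d', rfl⟩ : ∃ a b c d, y = ![a, b, c, d] := ⟨_, _, _, _, eq_vec y⟩
  have minor (i k l k' l' : ZMod 2) :
      π (X ![0, i, k, l] * X ![1, 1 + i, k', l']) = π (X ![0, i, k', l'] * X ![1, 1 + i, k, l]) :=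
    Ideal.Quotient.eq.mpr (Ideal.subset_span (Or.inl ⟨i, k, l, k', l', rfl⟩))
  change π (X ![a, b, c', d'] * X ![a', b', c, d]) = π (X ![a, b, c, d] * X ![a', b', c', d'])
  change a + b = a' + b' at h
  rcases ZMod.two_add_eq_add_cases h with ⟨rfl, rfl⟩ | ⟨rfl, rfl, rfl⟩ | ⟨rfl, rfl, rfl⟩
  · rw [mul_comm]
  · exact (minor b c d c' d').symm
  · rw [mul_comm, minor, mul_comm]

theorem mk_splice_of_right_sum_eq {x y : Pattern} (h : x 2 + x 3 = y 2 + y 3) :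
    π (X (splice x y) * X (splice y x)) = π (X x * X y) := by
  obtain ⟨a, b, c, d, rfl⟩ : ∃ a b c d, x = ![a, b, c, d] := ⟨_, _, _, _, eq_vec x⟩
  obtain ⟨a', b', c', d', rfl⟩ : ∃ a b c d, y = ![a, b, c, d] := ⟨_, _, _, _, eq_vec y⟩
  have minor (i k l k' l' : ZMod 2) :
      π (X ![k, l, i, 0] * X ![k', l', 1 + i, 1]) = π (X ![k', l', i, 0] * X ![k, l, 1 + i, 1]) :=
    Ideal.Quotient.eq.mpr (Ideal.subset_span (Or.inr ⟨i, k, l, k', l', rfl⟩))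
  change π (X ![a, b, c', d'] * X ![a', b', c, d]) = π (X ![a, b, c, d] * X ![a', b', c', d'])
  change c + d = c' + d' at h
  rw [add_comm c, add_comm c'] at h
  rcases ZMod.two_add_eq_add_cases h with ⟨rfl, rfl⟩ | ⟨rfl, rfl, rfl⟩ | ⟨rfl, rfl, rfl⟩
  · rw [mul_comm]
  · rw [mul_comm, minor]
  · rw [minor, mul_comm]

theorem splice_self (x : Pattern) : splice x x = x := (eq_vec x).symm

theorem exists_splice_mem {S : Multiset Pattern} {x y : Pattern} (hx : x ∈ S) (hy : y ∈ S)
    (hxy : π (X (splice x y) * X (splice y x)) = π (X x * X y)) :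
    ∃ T : Multiset Pattern, splice x y ∈ T ∧ π (T.map X).prod = π (S.map X).prod := by
  by_cases hne : x = y
  · subst hne
    exact ⟨S, by rwa [splice_self], rfl⟩
  obtain ⟨U, rfl⟩ : ∃ U, S = x ::ₘ y ::ₘ U := ⟨(S.erase x).erase y, by
    rw [Multiset.cons_erase ((Multiset.mem_erase_of_ne (Ne.symm hne)).mpr hy),
      Multiset.cons_erase hx]⟩
  refine ⟨splice x y ::ₘ splice y x ::ₘ U, Multiset.mem_cons_self _ _, ?_⟩
  simp only [Multiset.map_cons, Multiset.prod_cons, ← mul_assoc, map_mul] at hxy ⊢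
  rw [hxy]

theorem exists_mem_of_degree_eq {S S' : Multiset Pattern} {v : Pattern} (h : degree S = degree S')
    (hv : v ∈ S) : ∃ T : Multiset Pattern, v ∈ T ∧ π (T.map X).prod = π (S'.map X).prod := by
  obtain ⟨hleft, -, hinterior⟩ := map_eq_of_degree_eq h
  obtain ⟨a, ha, hav⟩ := Multiset.mem_map.mp (hleft ▸ Multiset.mem_map_of_mem left hv)
  obtain ⟨c, hc, hcv⟩ := Multiset.mem_map.mp (hinterior ▸ Multiset.mem_map_of_mem interior hv)
  simp only [left, interior, Prod.mk.injEq] at hav hcv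
  obtain ⟨T, hT, hTS'⟩ := exists_splice_mem ha hc
    (mk_splice_of_left_sum_eq (by rw [hav.1, hav.2, hcv.1]))
  obtain ⟨-, hright, -⟩ := map_eq_of_degree_eq ((degree_eq_of_mk_eq hTS').trans h.symm)
  obtain ⟨b, hb, hbv⟩ := Multiset.mem_map.mp (hright ▸ Multiset.mem_map_of_mem right hv)
  simp only [right, Prod.mk.injEq] at hbv
  obtain ⟨T', hT', hT'T⟩ := exists_splice_mem hT hb
    (mk_splice_of_right_sum_eq (show c 2 + c 3 = b 2 + b 3 by rw [hcv.2, hbv.1, hbv.2]))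
  have hsplice : splice (splice a c) b = v := by
    change ![a 0, a 1, b 2, b 3] = v
    rw [hav.1, hav.2, hbv.1, hbv.2, ← eq_vec]
  exact ⟨T', hsplice ▸ hT', hT'T.trans hTS'⟩

theorem mk_prod_X_eq_of_degree_eq {S S' : Multiset Pattern} (h : degree S = degree S') :
    π (S.map X).prod = π (S'.map X).prod := by
  induction S using Multiset.induction generalizing S' with
  | empty =>
    obtain ⟨h', -, -⟩ := map_eq_of_degree_eq h
    rw [Multiset.map_zero, eq_comm, Multiset.map_eq_zero] at h'
    rw [h']
  | cons v S ih =>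
    obtain ⟨T, hvT, hT⟩ := exists_mem_of_degree_eq h (Multiset.mem_cons_self v S)
    obtain ⟨T, rfl⟩ := Multiset.exists_cons_of_mem hvT
    have hST : degree S = degree T := by
      have := h.trans (degree_eq_of_mk_eq hT).symm
      rwa [degree_cons, degree_cons, add_right_inj] at this
    rw [← hT, Multiset.map_cons, Multiset.prod_cons, Multiset.map_cons, Multiset.prod_cons,
      map_mul, map_mul, ih hST]

end JC4

/-- **Example.** The ideal of phylogenetic invariants of the Jukes–Cantor binary model on
the balanced binary tree with four leaves is generated by the `2 × 2` minors of the four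
`2 × 4` matrices above. -/
theorem ker_phiJC4_eq_span_minors :
    RingHom.ker phiJC4 = Ideal.span jc4Minors := by
  refine le_antisymm ?_ JC4.span_minors_le_ker
  refine MvPolynomial.ker_le_of_monomial_sub_mem phiJC4 (fun m => JC4.degree m.toMultiset)
    (fun m => ?_) (fun m m' h => ?_)
  · rw [monomial_one_eq_prod_X, JC4.phiJC4_prod_X]
  · rw [monomial_one_eq_prod_X, monomial_one_eq_prod_X]
    exact Ideal.Quotient.eq.mp (JC4.mk_prod_X_eq_of_degree_eq h)
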